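/- Let α > 0 and f ∈ C(-1,1). Define g = T_α f and the projections (π_{α,B} f)(t) = ω_α ∫₀¹ f(st)(1-s²)^{(α-2)/2} ds and (π_{α,D} g)(t) = ω_α (1-t²) ∫₀¹ g(st)(1-s²t²)^{-(α+2)/2}(1-s²)^{(α-2)/2} ds. Then π_{α,D}(T_α f) = π_{α,B} f on (-1,1). -/

import Mathlib

/-- `ω_α = 2 π^{α/2} / Γ(α/2)`. -/
noncomputable def omegaConst (α : ℝ) : ℝ := 2 * Real.pi ^ (α / 2) / Real.Gamma (α / 2)

/-- The transform `T_α`, `(T_α f)(s) = (1-s²)^{α/2} f(s) + α s ∫₀ˢ f(x)(1-x²)^{(α-2)/2} dx`. -/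
noncomputable def Talpha (α : ℝ) (f : ℝ → ℝ) (s : ℝ) : ℝ :=
  (1 - s ^ 2) ^ (α / 2) * f s + α * s * ∫ x in (0 : ℝ)..s, f x * (1 - x ^ 2) ^ ((α - 2) / 2)

/-- The projection `(π_{α,B} f)(t) = ω_α ∫₀¹ f(st)(1-s²)^{(α-2)/2} ds`. -/
noncomputable def piB (α : ℝ) (f : ℝ → ℝ) (t : ℝ) : ℝ :=
  omegaConst α * ∫ s in (0 : ℝ)..1, f (s * t) * (1 - s ^ 2) ^ ((α - 2) / 2)

/-- The projection
`(π_{α,D} g)(t) = ω_α (1-t²) ∫₀¹ g(st)(1-s²t²)^{-(α+2)/2}(1-s²)^{(α-2)/2} ds`. -/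
noncomputable def piD (α : ℝ) (g : ℝ → ℝ) (t : ℝ) : ℝ :=
  omegaConst α * (1 - t ^ 2) *
    ∫ s in (0 : ℝ)..1, g (s * t) * (1 - s ^ 2 * t ^ 2) ^ (-(α + 2) / 2)
      * (1 - s ^ 2) ^ ((α - 2) / 2)


open MeasureTheory Set intervalIntegral

noncomputable def Fa (α : ℝ) (f : ℝ → ℝ) (u : ℝ) : ℝ :=
  ∫ x in (0:ℝ)..u, f x * (1 - x ^ 2) ^ ((α - 2) / 2)

lemma key_integrable {α : ℝ} (hα : 0 < α) {c : ℝ → ℝ} (hc : ContinuousOn c (Icc 0 1)) :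
    IntervalIntegrable (fun s => c s * (1 - s ^ 2) ^ ((α - 2) / 2)) volume 0 1 := by
  set p := (α - 2) / 2 with hp_def
  have hp : -1 < p := by rw [hp_def]; linarith
  obtain ⟨M, hM⟩ := isCompact_Icc.exists_bound_of_continuousOn hc
  have hM0 : 0 ≤ M := le_trans (norm_nonneg _) (hM 0 (by norm_num))
  set C : ℝ := max 1 ((2:ℝ) ^ p) with hC_def
  have hC0 : 0 < C := lt_of_lt_of_le one_pos (le_max_left _ _)
  have hrestr : volume.restrict (Ioo (0:ℝ) 1) = volume.restrict (uIoc (0:ℝ) 1) := by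
    rw [uIoc_of_le (by norm_num : (0:ℝ) ≤ 1)]
    exact Measure.restrict_congr_set Ioo_ae_eq_Ioc
  -- dominating function
  have hdom : IntervalIntegrable (fun s => M * C * (1 - s) ^ p) volume 0 1 := by
    have h0 : IntervalIntegrable (fun x : ℝ => x ^ p) volume 0 1 :=
      intervalIntegral.intervalIntegrable_rpow' hp
    have h1 := (h0.comp_sub_left 1)
    simp only [sub_zero, sub_self] at h1
    exact (h1.symm.const_mul (M * C))
  apply hdom.mono_fun
  · -- measurability
    rw [← hrestr]
    refine ContinuousOn.aestronglyMeasurable ?_ measurableSet_Ioo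
    refine (hc.mono (Ioo_subset_Icc_self)).mul ?_
    refine ContinuousOn.rpow_const ?_ ?_
    · exact (continuous_const.sub (continuous_pow 2)).continuousOn
    · intro x hx
      left
      have h1 : x ^ 2 < 1 := by
        nlinarith [hx.1, hx.2]
      nlinarith
  · -- bound
    rw [← hrestr]
    refine Filter.eventually_of_mem (ae_restrict_mem measurableSet_Ioo) ?_
    intro s hs
    have h1s : 0 < 1 - s := by linarith [hs.2]
    have h1s' : 0 < 1 + s := by linarith [hs.1]
    have hsplit : (1 - s ^ 2 : ℝ) ^ p = (1 - s) ^ p * (1 + s) ^ p := by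
      rw [← Real.mul_rpow h1s.le h1s'.le]; ring_nf
    have hbound2 : (1 + s) ^ p ≤ C := by
      rcases le_or_gt 0 p with h | h
      · exact le_trans (Real.rpow_le_rpow (by linarith) (by linarith [hs.2]) h) (le_max_right _ _)
      · refine le_trans ?_ (le_max_left _ _)
        exact Real.rpow_le_one_of_one_le_of_nonpos (by linarith [hs.1]) h.le
    have hpos : (0:ℝ) ≤ (1 - s) ^ p := Real.rpow_nonneg h1s.le p
    have hpos2 : (0:ℝ) ≤ (1 + s) ^ p := Real.rpow_nonneg h1s'.le p
    calc ‖c s * (1 - s ^ 2) ^ p‖ = ‖c s‖ * ((1 - s) ^ p * (1 + s) ^ p) := by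
            rw [norm_mul, hsplit]; congr 1
            rw [Real.norm_eq_abs, abs_of_nonneg (by positivity)]
      _ ≤ M * ((1 - s) ^ p * C) := by
            apply mul_le_mul (hM s (Ioo_subset_Icc_self hs)) _ (by positivity) hM0
            exact mul_le_mul_of_nonneg_left hbound2 hpos
      _ = M * C * (1 - s) ^ p := by ring
      _ ≤ ‖M * C * (1 - s) ^ p‖ := le_abs_self _

noncomputable def Gfun (α : ℝ) (f : ℝ → ℝ) (t s : ℝ) : ℝ :=
  Fa α f (s * t) * ((1 - s ^ 2) ^ (α / 2) * (1 - s ^ 2 * t ^ 2) ^ (-α / 2))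

noncomputable def Dfun (α : ℝ) (f : ℝ → ℝ) (t s : ℝ) : ℝ :=
  (t * f (s * t) * (1 - s ^ 2 * t ^ 2) ^ ((α - 2) / 2) *
      ((1 - s ^ 2) * (1 - s ^ 2 * t ^ 2) ^ (-α / 2))
    + Fa α f (s * t) * ((-α * s) * (1 - s ^ 2 * t ^ 2) ^ (-α / 2)
        + (α * s * t ^ 2) * (1 - s ^ 2) * (1 - s ^ 2 * t ^ 2) ^ (-α / 2 - 1)))
  * (1 - s ^ 2) ^ ((α - 2) / 2)

section aux0

lemma w_cont {α : ℝ} {f : ℝ → ℝ} (hf : ContinuousOn f (Ioo (-1) 1)) :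
    ContinuousOn (fun x => f x * (1 - x ^ 2) ^ ((α - 2) / 2)) (Ioo (-1) 1) := by
  refine hf.mul (ContinuousOn.rpow_const ?_ ?_)
  · exact (continuous_const.sub (continuous_pow 2)).continuousOn
  · intro x hx
    left
    have h1 : x ^ 2 < 1 := by nlinarith [hx.1, hx.2]
    nlinarith

lemma Fa_hasDerivAt {α : ℝ} {f : ℝ → ℝ} (hf : ContinuousOn f (Ioo (-1) 1))
    {u : ℝ} (hu : u ∈ Ioo (-1:ℝ) 1) :
    HasDerivAt (Fa α f) (f u * (1 - u ^ 2) ^ ((α - 2) / 2)) u := by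
  have hw := w_cont (α := α) hf
  have hsub : uIcc (0:ℝ) u ⊆ Ioo (-1:ℝ) 1 := by
    intro x hx
    rcases mem_uIcc.1 hx with h | h <;>
      constructor <;> [linarith [hu.1, h.1, h.2]; linarith [hu.2, h.1, h.2];
        linarith [hu.1, h.1, h.2]; linarith [hu.2, h.1, h.2]]
  refine intervalIntegral.integral_hasDerivAt_right
    ((hw.mono hsub).intervalIntegrable) ?_ ?_
  · exact (hw.stronglyMeasurableAtFilter isOpen_Ioo) u hu
  · exact (hw.continuousAt (isOpen_Ioo.mem_nhds hu))

lemma Fa_continuousAt {α : ℝ} {f : ℝ → ℝ} (hf : ContinuousOn f (Ioo (-1) 1))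
    {u : ℝ} (hu : u ∈ Ioo (-1:ℝ) 1) : ContinuousAt (Fa α f) u :=
  (Fa_hasDerivAt hf hu).continuousAt


end aux0

section aux

variable {α : ℝ} {f : ℝ → ℝ} {t : ℝ}

lemma hasDerivAt_Gfun (hα : 0 < α) (hf : ContinuousOn f (Ioo (-1) 1))
    (ht : t ∈ Ioo (-1:ℝ) 1) {s : ℝ} (hs : s ∈ Ioo (0:ℝ) 1) :
    HasDerivAt (Gfun α f t) (Dfun α f t s) s := by
  have hb1 : 0 < 1 - s ^ 2 := by nlinarith [hs.1, hs.2]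
  have hb2 : 0 < 1 - s ^ 2 * t ^ 2 := by nlinarith [hs.1, hs.2, ht.1, ht.2, sq_nonneg t]
  have hst : s * t ∈ Ioo (-1:ℝ) 1 := by
    constructor <;> nlinarith [hs.1, hs.2, ht.1, ht.2]
  have hA : HasDerivAt (fun s => Fa α f (s * t))
      (f (s * t) * (1 - (s * t) ^ 2) ^ ((α - 2) / 2) * t) s :=
    by have h := (Fa_hasDerivAt (α := α) hf hst).comp s (hasDerivAt_mul_const t); exact h
  have hB : HasDerivAt (fun s : ℝ => (1 - s ^ 2) ^ (α / 2))
      (-(↑2 * s ^ 1) * (α / 2) * (1 - s ^ 2) ^ (α / 2 - 1)) s := by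
    exact ((hasDerivAt_pow 2 s).const_sub 1).rpow_const (Or.inl hb1.ne')
  have hC : HasDerivAt (fun s : ℝ => (1 - s ^ 2 * t ^ 2) ^ (-α / 2))
      (-(↑2 * s ^ 1 * t ^ 2) * (-α / 2) * (1 - s ^ 2 * t ^ 2) ^ (-α / 2 - 1)) s := by
    exact (((hasDerivAt_pow 2 s).mul_const (t ^ 2)).const_sub 1).rpow_const (Or.inl hb2.ne')
  have hG := hA.mul (hB.mul hC)
  have hP1 : (1 - s ^ 2) ^ (α / 2) = (1 - s ^ 2) * (1 - s ^ 2) ^ ((α - 2) / 2) := by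
    rw [show α / 2 = 1 + (α - 2) / 2 by ring, Real.rpow_add hb1, Real.rpow_one]
  have hP2 : (α:ℝ) / 2 - 1 = (α - 2) / 2 := by ring
  refine hG.congr_deriv ?_
  symm
  simp only [Pi.mul_apply]
  rw [hP1, hP2, mul_pow]
  unfold Dfun
  ring
end aux

section aux2

variable {α : ℝ} {f : ℝ → ℝ} {t : ℝ}

lemma maps_to_Ioo (ht : t ∈ Ioo (-1:ℝ) 1) {s : ℝ} (hs : s ∈ Icc (0:ℝ) 1) :
    s * t ∈ Ioo (-1:ℝ) 1 := by
  constructor <;> nlinarith [hs.1, hs.2, ht.1, ht.2]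

lemma cont_b2 (ht : t ∈ Ioo (-1:ℝ) 1) (q : ℝ) :
    ContinuousOn (fun s : ℝ => (1 - s ^ 2 * t ^ 2) ^ q) (Icc 0 1) := by
  refine ContinuousOn.rpow_const ?_ ?_
  · exact (continuous_const.sub ((continuous_pow 2).mul continuous_const)).continuousOn
  · intro s hs
    left
    have hs2 : s ^ 2 ≤ 1 := by nlinarith [hs.1, hs.2]
    have ht2 : t ^ 2 < 1 := by nlinarith [ht.1, ht.2]
    have : 0 < 1 - s ^ 2 * t ^ 2 := by nlinarith [sq_nonneg t, sq_nonneg s]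
    exact this.ne'

lemma cont_fst (hf : ContinuousOn f (Ioo (-1) 1)) (ht : t ∈ Ioo (-1:ℝ) 1) :
    ContinuousOn (fun s : ℝ => f (s * t)) (Icc 0 1) :=
  hf.comp (continuous_id.mul continuous_const).continuousOn fun s hs => maps_to_Ioo ht hs

lemma cont_Fst (hf : ContinuousOn f (Ioo (-1) 1)) (ht : t ∈ Ioo (-1:ℝ) 1) :
    ContinuousOn (fun s : ℝ => Fa α f (s * t)) (Icc 0 1) := by
  refine ContinuousOn.comp (fun u hu => (Fa_continuousAt hf hu).continuousWithinAt)
    (continuous_id.mul continuous_const).continuousOn fun s hs => maps_to_Ioo ht hs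

lemma cont_Gfun (hα : 0 < α) (hf : ContinuousOn f (Ioo (-1) 1)) (ht : t ∈ Ioo (-1:ℝ) 1) :
    ContinuousOn (Gfun α f t) (Icc 0 1) := by
  refine (cont_Fst hf ht).mul (ContinuousOn.mul ?_ (cont_b2 ht _))
  refine ContinuousOn.rpow_const
    (continuous_const.sub (continuous_pow 2)).continuousOn fun s _ => Or.inr (by positivity)

lemma integrable_Dfun (hα : 0 < α) (hf : ContinuousOn f (Ioo (-1) 1))
    (ht : t ∈ Ioo (-1:ℝ) 1) :
    IntervalIntegrable (Dfun α f t) MeasureTheory.volume 0 1 := by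
  have hc : ContinuousOn (fun s : ℝ =>
      t * f (s * t) * (1 - s ^ 2 * t ^ 2) ^ ((α - 2) / 2) *
        ((1 - s ^ 2) * (1 - s ^ 2 * t ^ 2) ^ (-α / 2))
      + Fa α f (s * t) * ((-α * s) * (1 - s ^ 2 * t ^ 2) ^ (-α / 2)
          + (α * s * t ^ 2) * (1 - s ^ 2) * (1 - s ^ 2 * t ^ 2) ^ (-α / 2 - 1))) (Icc 0 1) := by
    refine ContinuousOn.add ?_ ?_
    · exact ((continuousOn_const.mul (cont_fst hf ht)).mul (cont_b2 ht _)).mul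
        (((continuous_const.sub (continuous_pow 2)).continuousOn).mul (cont_b2 ht _))
    · refine (cont_Fst hf ht).mul (ContinuousOn.add ?_ ?_)
      · exact (continuous_const.mul continuous_id).continuousOn.mul (cont_b2 ht _)
      · refine ContinuousOn.mul (ContinuousOn.mul ?_ ?_) (cont_b2 ht _)
        · exact ((continuous_const.mul continuous_id).mul continuous_const).continuousOn
        · exact (continuous_const.sub (continuous_pow 2)).continuousOn
  exact key_integrable hα hc

lemma integral_Dfun_eq_zero (hα : 0 < α) (hf : ContinuousOn f (Ioo (-1) 1))
    (ht : t ∈ Ioo (-1:ℝ) 1) :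
    ∫ s in (0:ℝ)..1, Dfun α f t s = 0 := by
  rw [intervalIntegral.integral_eq_sub_of_hasDerivAt_of_le (by norm_num)
    (cont_Gfun hα hf ht) (fun s hs => hasDerivAt_Gfun hα hf ht hs)
    (integrable_Dfun hα hf ht)]
  have h1 : Gfun α f t 1 = 0 := by
    have : ((1:ℝ) - 1 ^ 2) = 0 := by norm_num
    simp [Gfun, this, Real.zero_rpow (by positivity : α / 2 ≠ 0)]
  have h0 : Gfun α f t 0 = 0 := by
    simp [Gfun, Fa]
  rw [h0, h1, sub_zero]

lemma pointwise_identity (hα : 0 < α) (hf : ContinuousOn f (Ioo (-1) 1))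
    (ht : t ∈ Ioo (-1:ℝ) 1) {s : ℝ} (hs : s ∈ Ioo (0:ℝ) 1) :
    f (s * t) * (1 - s ^ 2) ^ ((α - 2) / 2)
      - (1 - t ^ 2) * (Talpha α f (s * t) * (1 - s ^ 2 * t ^ 2) ^ (-(α + 2) / 2)
          * (1 - s ^ 2) ^ ((α - 2) / 2))
      = t * Dfun α f t s := by
  have hb1 : 0 < 1 - s ^ 2 := by nlinarith [hs.1, hs.2]
  have hb2 : 0 < 1 - s ^ 2 * t ^ 2 := by nlinarith [hs.1, hs.2, ht.1, ht.2, sq_nonneg t]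
  have hQ : 0 < (1 - s ^ 2 * t ^ 2) ^ (-(α + 2) / 2) := Real.rpow_pos_of_pos hb2 _
  have hE1 : (1 - s ^ 2 * t ^ 2) ^ (α / 2)
      = ((1 - s ^ 2 * t ^ 2) ^ (-(α + 2) / 2))⁻¹ * (1 - s ^ 2 * t ^ 2)⁻¹ := by
    rw [show α / 2 = -(-(α + 2) / 2) + (-1) by ring, Real.rpow_add hb2,
      Real.rpow_neg hb2.le, Real.rpow_neg_one]
  have hE2 : (1 - s ^ 2 * t ^ 2) ^ ((α - 2) / 2)
      = ((1 - s ^ 2 * t ^ 2) ^ (-(α + 2) / 2))⁻¹ * ((1 - s ^ 2 * t ^ 2)⁻¹ * (1 - s ^ 2 * t ^ 2)⁻¹) := by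
    rw [show (α - 2) / 2 = -(-(α + 2) / 2) + (-1 + -1) by ring, Real.rpow_add hb2,
      Real.rpow_add hb2, Real.rpow_neg hb2.le, Real.rpow_neg_one]
  have hE3 : (1 - s ^ 2 * t ^ 2) ^ (-α / 2)
      = (1 - s ^ 2 * t ^ 2) ^ (-(α + 2) / 2) * (1 - s ^ 2 * t ^ 2) := by
    rw [show -α / 2 = -(α + 2) / 2 + 1 by ring, Real.rpow_add hb2, Real.rpow_one]
  have hE4 : (-α / 2 - 1 : ℝ) = -(α + 2) / 2 := by ring
  unfold Dfun Talpha
  rw [mul_pow]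
  rw [hE4, hE3, hE2, hE1]
  have hFa : (∫ x in (0:ℝ)..(s*t), f x * (1 - x ^ 2) ^ ((α - 2) / 2)) = Fa α f (s * t) := rfl
  rw [hFa]
  field_simp
  ring

end aux2

/-- For `α > 0` and `f ∈ C(-1,1)`, one has `π_{α,D}(T_α f) = π_{α,B} f` on `(-1,1)`. -/
theorem stmt_9 (α : ℝ) (hα : 0 < α) (f : ℝ → ℝ)
    (hf : ContinuousOn f (Set.Ioo (-1) 1)) :
    ∀ t ∈ Set.Ioo (-1 : ℝ) 1, piD α (Talpha α f) t = piB α f t := by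
  intro t ht
  have hIB : IntervalIntegrable (fun s => f (s * t) * (1 - s ^ 2) ^ ((α - 2) / 2))
      MeasureTheory.volume 0 1 := key_integrable hα (cont_fst hf ht)
  have hcT : ContinuousOn (fun s : ℝ =>
      Talpha α f (s * t) * (1 - s ^ 2 * t ^ 2) ^ (-(α + 2) / 2)) (Icc 0 1) := by
    refine ContinuousOn.mul ?_ (cont_b2 ht _)
    have heq : (fun s : ℝ => Talpha α f (s * t)) = fun s : ℝ =>
        (1 - s ^ 2 * t ^ 2) ^ (α / 2) * f (s * t) + α * (s * t) * Fa α f (s * t) := by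
      funext s
      show (1 - (s * t) ^ 2) ^ (α / 2) * f (s * t) + _ = _
      rw [mul_pow]
      rfl
    rw [heq]
    refine ContinuousOn.add (ContinuousOn.mul ?_ (cont_fst hf ht)) (ContinuousOn.mul ?_ (cont_Fst hf ht))
    · refine ContinuousOn.rpow_const ?_ fun s _ => Or.inr (by positivity)
      exact (continuous_const.sub ((continuous_pow 2).mul continuous_const)).continuousOn
    · exact (continuous_const.mul (continuous_id.mul continuous_const)).continuousOn
  have hID : IntervalIntegrable (fun s => Talpha α f (s * t) *
      (1 - s ^ 2 * t ^ 2) ^ (-(α + 2) / 2) * (1 - s ^ 2) ^ ((α - 2) / 2))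
      MeasureTheory.volume 0 1 := key_integrable hα hcT
  have hDz := integral_Dfun_eq_zero hα hf ht
  have hcongr : (∫ s in (0:ℝ)..1, (f (s * t) * (1 - s ^ 2) ^ ((α - 2) / 2)
      - (1 - t ^ 2) * (Talpha α f (s * t) * (1 - s ^ 2 * t ^ 2) ^ (-(α + 2) / 2)
          * (1 - s ^ 2) ^ ((α - 2) / 2))))
      = ∫ s in (0:ℝ)..1, t * Dfun α f t s := by
    apply intervalIntegral.integral_congr_ae
    have h1 : ∀ᵐ x : ℝ ∂MeasureTheory.volume, x ≠ 1 := by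
      refine MeasureTheory.ae_iff.2 ?_
      simpa using Real.volume_singleton
    filter_upwards [h1] with x hx hxI
    rw [uIoc_of_le (by norm_num : (0:ℝ) ≤ 1)] at hxI
    have hxIoo : x ∈ Ioo (0:ℝ) 1 := ⟨hxI.1, lt_of_le_of_ne hxI.2 hx⟩
    rw [pointwise_identity hα hf ht hxIoo]
  rw [intervalIntegral.integral_sub hIB (hID.const_mul _),
    intervalIntegral.integral_const_mul, intervalIntegral.integral_const_mul, hDz,
    mul_zero, sub_eq_zero] at hcongr
  unfold piD piB
  rw [mul_assoc, hcongr]
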